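/- arXiv:1106.5747 — 3 statements merged into one kernel-verified Lean document; each statement's English description precedes it below -/
import Mathlib

section
/- If there exist sets I, J and injective S-act homomorphisms G₁ ↪ G₂^I and G₂ ↪ G₁^J, then G₁ and G₂ are geometrically equivalent. -/
/-- The kernel of a map, as a set of pairs. -/
def actKer {A B : Type} (f : A → B) : Set (A × A) := {p | f p.1 = f p.2}

/-- A homomorphism of left `S`-acts is an `S`-equivariant map. -/
def IsActHom (S : Type) [Monoid S] {A B : Type} [MulAction S A] [MulAction S B]
    (f : A → B) : Prop := ∀ (s : S) (a : A), f (s • a) = s • f a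

/-- The free left `S`-act on `n` generators: a coproduct of `n` copies of `S`. -/
def FreeAct (S : Type) (n : ℕ) : Type := Fin n × S

instance (S : Type) [Monoid S] (n : ℕ) : SMul S (FreeAct S n) :=
  ⟨fun s p => (p.1, s * p.2)⟩

instance (S : Type) [Monoid S] (n : ℕ) : MulAction S (FreeAct S n) where
  one_smul p := show (p.1, 1 * p.2) = p by rw [one_mul]; rfl
  mul_smul s t p := show (p.1, (s * t) * p.2) = (p.1, s * (t * p.2)) by rw [mul_assoc]

/-- A congruence on an `S`-act: an equivalence relation compatible with the action. -/
def IsCongruence (S : Type) [Monoid S] {A : Type} [MulAction S A]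
    (T : Set (A × A)) : Prop :=
  Equivalence (fun a b => (a, b) ∈ T) ∧
    ∀ (s : S) (a b : A), (a, b) ∈ T → (s • a, s • b) ∈ T

/-- The `G`-closure `T''` of a binary relation `T` on a free `S`-act:
the intersection of the kernels of all homomorphisms into `G` whose kernel contains `T`. -/
def actClosure (S : Type) [Monoid S] (G : Type) [MulAction S G] {n : ℕ}
    (T : Set (FreeAct S n × FreeAct S n)) : Set (FreeAct S n × FreeAct S n) :=
  {p | ∀ f : FreeAct S n → G, IsActHom S f → T ⊆ actKer f → f p.1 = f p.2}

/-- `T` is a `G`-closed congruence: an intersection of kernels of a set of homomorphisms. -/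
def GClosed (S : Type) [Monoid S] (G : Type) [MulAction S G] {n : ℕ}
    (T : Set (FreeAct S n × FreeAct S n)) : Prop :=
  ∃ A : Set (FreeAct S n → G), (∀ f ∈ A, IsActHom S f) ∧
    T = {p | ∀ f ∈ A, f p.1 = f p.2}

/-- Geometric equivalence of `S`-acts. -/
def GeomEquiv (S : Type) [Monoid S] (G₁ G₂ : Type) [MulAction S G₁] [MulAction S G₂] : Prop :=
  ∀ (n : ℕ) (T : Set (FreeAct S n × FreeAct S n)),
    actClosure S G₁ T = actClosure S G₂ T

/-- Coproduct (disjoint union) action on `A ⊕ B`. -/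
instance (S : Type) [Monoid S] {A B : Type} [MulAction S A] [MulAction S B] :
    SMul S (A ⊕ B) :=
  ⟨fun s x => match x with
    | Sum.inl a => Sum.inl (s • a)
    | Sum.inr b => Sum.inr (s • b)⟩

instance (S : Type) [Monoid S] {A B : Type} [MulAction S A] [MulAction S B] :
    MulAction S (A ⊕ B) where
  one_smul x := by
    cases x with
    | inl a => show Sum.inl ((1 : S) • a) = _; rw [one_smul]
    | inr b => show Sum.inr ((1 : S) • b) = _; rw [one_smul]
  mul_smul s t x := by
    cases x with
    | inl a => show Sum.inl ((s * t) • a) = Sum.inl (s • t • a); rw [mul_smul]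
    | inr b => show Sum.inr ((s * t) • b) = Sum.inr (s • t • b); rw [mul_smul]

/-- `Copies I A` is the coproduct of `I` copies of the `S`-act `A`. -/
def Copies (I A : Type) : Type := I × A

instance (S : Type) [Monoid S] {I A : Type} [MulAction S A] : SMul S (Copies I A) :=
  ⟨fun s p => (p.1, s • p.2)⟩

instance (S : Type) [Monoid S] {I A : Type} [MulAction S A] : MulAction S (Copies I A) where
  one_smul p := show (p.1, (1 : S) • p.2) = p by rw [one_smul]; rfl
  mul_smul s t p := show (p.1, (s * t) • p.2) = (p.1, s • t • p.2) by rw [mul_smul]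

/-! An `S`-hom `f : F_X → G₁` whose kernel contains `T` yields, through an embedding
`e : G₁ ↪ G₂^I`, the homs `x ↦ e (f x) i` into `G₂`, whose kernels still contain `T`.
A pair in `T''_{G₂}` is identified by all of them, hence by `e ∘ f`, hence by `f`; so
`T''_{G₂} ⊆ T''_{G₁}`, and the two embeddings give both inclusions. -/

section ActHom

variable {S : Type} [Monoid S] {A B C : Type} [MulAction S A] [MulAction S B] [MulAction S C]

theorem IsActHom.comp {g : B → C} {f : A → B} (hg : IsActHom S g) (hf : IsActHom S f) :
    IsActHom S (g ∘ f) := fun s a => by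
  simp only [Function.comp_apply, hf s a, hg s (f a)]

theorem isActHom_eval {I : Type} (i : I) : IsActHom S fun x : I → A => x i :=
  fun _ _ => rfl

theorem actKer_subset_actKer_comp (g : B → C) (f : A → B) : actKer f ⊆ actKer (g ∘ f) :=
  fun _ hp => congrArg g hp

theorem actClosure_subset_of_injective_pi {G₁ G₂ I : Type} [MulAction S G₁] [MulAction S G₂]
    {e : G₁ → I → G₂} (he : IsActHom S e) (hinj : Function.Injective e) {n : ℕ}
    (T : Set (FreeAct S n × FreeAct S n)) :
    actClosure S G₂ T ⊆ actClosure S G₁ T := fun _ hp f hf hT =>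
  hinj <| funext fun i =>
    hp _ (((isActHom_eval i).comp he).comp hf)
      (hT.trans (actKer_subset_actKer_comp ((fun x => x i) ∘ e) f))

end ActHom

/-- If `G₁` embeds in a power `G₂^I` and `G₂` embeds in a power `G₁^J`,
then `G₁` and `G₂` are geometrically equivalent. -/
theorem geom_equiv_of_mutual_power_embeddings
    (S : Type) [Monoid S] (G₁ G₂ : Type) [MulAction S G₁] [MulAction S G₂]
    (I J : Type)
    (e₁ : G₁ → (I → G₂)) (he₁ : IsActHom S e₁) (hinj₁ : Function.Injective e₁)
    (e₂ : G₂ → (J → G₁)) (he₂ : IsActHom S e₂) (hinj₂ : Function.Injective e₂) :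
    GeomEquiv S G₁ G₂ := fun _ T =>
  (actClosure_subset_of_injective_pi he₂ hinj₂ T).antisymm
    (actClosure_subset_of_injective_pi he₁ hinj₁ T)
end

section
/- Let N be a proper normal subgroup of a group S, B any S-act, and I a nonempty set. Then B ⊔ (S/N)^{(*)I} is geometrically equivalent to B ⊔ S/N; in particular, the coproduct of I copies of S/N is geometrically equivalent to S/N. -/
/-! If `τ : A → A` is equivariant and has no fixed points, then `I` copies of `A` embed into the
power `A ^ Option I` by sending `a` in the `i`-th copy to `a` at `none` and at `some i`, and
to `τ a` at every other `some j`. Conversely `A` embeds into `Copies I A` as one copy, and both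
embeddings extend to coproducts with a further act `B`. Acts embedding into powers of each other
have the same closed congruences. For `A = S ⧸ N`, right multiplication by a coset `t̄ ≠ 1̄`
serves as `τ`. -/

section Embeddings

variable (S : Type) [Monoid S] {G₁ G₂ : Type} [MulAction S G₁] [MulAction S G₂]

theorem actClosure_subset_of_powerEmbedding {J : Type} (ι : G₂ → J → G₁)
    (hinj : Function.Injective ι) (hhom : IsActHom S ι) {n : ℕ}
    (T : Set (FreeAct S n × FreeAct S n)) :
    actClosure S G₁ T ⊆ actClosure S G₂ T := by
  intro p hp f hf hT
  apply hinj
  funext j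
  exact hp (fun x => ι (f x) j)
    (fun s a => by simp only [hf s a, hhom s (f a), Pi.smul_apply])
    (fun q hq => congrArg (ι · j) (hT hq))

theorem actClosure_subset_of_injective (f : G₂ → G₁) (hinj : Function.Injective f)
    (hhom : IsActHom S f) {n : ℕ} (T : Set (FreeAct S n × FreeAct S n)) :
    actClosure S G₁ T ⊆ actClosure S G₂ T :=
  actClosure_subset_of_powerEmbedding S (fun x (_ : Unit) => f x)
    (fun _ _ h => hinj (congrFun h ())) (fun s a => funext fun _ => hhom s a) T

theorem geomEquiv_of_injective_of_powerEmbedding {J : Type}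
    (f : G₂ → G₁) (hf : Function.Injective f) (hfhom : IsActHom S f)
    (ι : G₁ → J → G₂) (hι : Function.Injective ι) (hιhom : IsActHom S ι) :
    GeomEquiv S G₁ G₂ := fun _ T =>
  (actClosure_subset_of_injective S f hf hfhom T).antisymm
    (actClosure_subset_of_powerEmbedding S ι hι hιhom T)

end Embeddings

section Coproducts

variable (S : Type) [Monoid S] {A A' B : Type} [MulAction S A] [MulAction S A'] [MulAction S B]

theorem isActHom_sumMap_id {f : A → A'} (hf : IsActHom S f) :
    IsActHom S (Sum.map (id : B → B) f)
  | _, .inl _ => rfl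
  | s, .inr a => congrArg Sum.inr (hf s a)

def sumPowerMap {J : Type} (ι : A → J → A') : B ⊕ A → J → B ⊕ A' :=
  fun x j => Sum.map id (ι · j) x

variable {S}

theorem sumPowerMap_injective {J : Type} [Nonempty J] {ι : A → J → A'}
    (hι : Function.Injective ι) : Function.Injective (sumPowerMap (B := B) ι) := by
  rintro (b | a) (b' | a') h
  case inr.inr =>
    exact congrArg Sum.inr (hι (funext fun j => by simpa [sumPowerMap] using congrFun h j))
  all_goals simpa [sumPowerMap] using congrFun h (Classical.arbitrary J)

theorem isActHom_sumPowerMap {J : Type} {ι : A → J → A'} (hι : IsActHom S ι) :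
    IsActHom S (sumPowerMap (B := B) ι)
  | _, .inl _ => rfl
  | s, .inr a => funext fun j => congrArg Sum.inr (congrFun (hι s a) j)

end Coproducts

section Copies

variable (S : Type) [Monoid S] {A B I : Type} [MulAction S A] [MulAction S B]

def copiesPowerMap [DecidableEq I] (τ : A → A) (p : Copies I A) : Option I → A
  | none => p.2
  | some i => if i = p.1 then p.2 else τ p.2

variable {S}

theorem copiesPowerMap_injective [DecidableEq I] {τ : A → A} (hτ : ∀ a, τ a ≠ a) :
    Function.Injective (copiesPowerMap (I := I) τ) := by
  rintro ⟨i, a⟩ ⟨i', a'⟩ h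
  obtain rfl : a = a' := congrFun h none
  have hi := congrFun h (some i)
  simp only [copiesPowerMap, if_true] at hi
  by_cases hii : i = i'
  · rw [hii]
  · rw [if_neg hii] at hi
    exact absurd hi.symm (hτ a)

theorem isActHom_copiesPowerMap [DecidableEq I] {τ : A → A} (hτ : IsActHom S τ) :
    IsActHom S (copiesPowerMap (I := I) τ)
  | s, (i, a) => funext fun
    | none => rfl
    | some j => by
      show (if j = i then s • a else τ (s • a)) = s • (if j = i then a else τ a)
      split_ifs
      · rfl
      · exact hτ s a

variable [Nonempty I] {τ : A → A} (hτ : IsActHom S τ) (hfix : ∀ a, τ a ≠ a)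
include hτ hfix

theorem geomEquiv_copies_of_fixedPointFree : GeomEquiv S (Copies I A) A := by
  classical
  obtain ⟨i₀⟩ := ‹Nonempty I›
  exact geomEquiv_of_injective_of_powerEmbedding S (fun a => ((i₀, a) : Copies I A))
    (fun _ _ h => congrArg Prod.snd h) (fun _ _ => rfl)
    (copiesPowerMap τ) (copiesPowerMap_injective hfix) (isActHom_copiesPowerMap hτ)

theorem geomEquiv_sum_copies_of_fixedPointFree :
    GeomEquiv S (B ⊕ Copies I A) (B ⊕ A) := by
  classical
  obtain ⟨i₀⟩ := ‹Nonempty I›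
  exact geomEquiv_of_injective_of_powerEmbedding S
    (Sum.map id fun a => ((i₀, a) : Copies I A))
    (Function.injective_id.sumMap fun _ _ h => congrArg Prod.snd h)
    (isActHom_sumMap_id S fun _ _ => rfl)
    (sumPowerMap (copiesPowerMap τ)) (sumPowerMap_injective (copiesPowerMap_injective hfix))
    (isActHom_sumPowerMap (isActHom_copiesPowerMap hτ))

end Copies

theorem QuotientGroup.smul_mul {S : Type} [Group S] (N : Subgroup S) [N.Normal]
    (s : S) (q r : S ⧸ N) : s • (q * r) = s • q * r := by
  induction q using QuotientGroup.induction_on with | H x =>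
  induction r using QuotientGroup.induction_on with | H y =>
  exact congrArg QuotientGroup.mk (mul_assoc s x y).symm

/-- For a proper normal subgroup `N` of a group `S`, any `S`-act `B`, and
a nonempty set `I`: `B ⊔ (S/N)^{(*)I} ∼ B ⊔ S/N`, and in particular
`(S/N)^{(*)I} ∼ S/N`. -/
theorem copies_of_quotient_by_normal_geom_equiv
    (S : Type) [Group S] (N : Subgroup S) [N.Normal] (hN : N ≠ ⊤)
    (B : Type) [MulAction S B] (I : Type) [Nonempty I] :
    GeomEquiv S (B ⊕ Copies I (S ⧸ N)) (B ⊕ (S ⧸ N)) ∧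
    GeomEquiv S (Copies I (S ⧸ N)) (S ⧸ N) := by
  obtain ⟨t, ht⟩ : ∃ t : S, t ∉ N := by simpa [Subgroup.eq_top_iff'] using hN
  let τ : S ⧸ N → S ⧸ N := (· * (t : S ⧸ N))
  have hτ : IsActHom S τ := fun s q => (QuotientGroup.smul_mul N s q t).symm
  have hfix : ∀ q, τ q ≠ q := fun q h =>
    ht ((QuotientGroup.eq_one_iff t).mp (mul_eq_left.mp h))
  exact ⟨geomEquiv_sum_copies_of_fixedPointFree hτ hfix,
    geomEquiv_copies_of_fixedPointFree hτ hfix⟩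
end

section
/- For any S-act A and any set I with |I| ≥ 2, the coproduct A^{(*)I} of I copies of A is geometrically equivalent to A^{(*)2} = A ⊔ A. Moreover, for any S-act C, C ⊔ A^{(*)I} is geometrically equivalent to C ⊔ A^{(*)2}. -/
/-- `x ↦ (e k x)_k` is an embedding of the act `G₁` into the power `G₂^K`. -/
def IsPowerEmbedding (S : Type) [Monoid S] {K G₁ G₂ : Type} [MulAction S G₁] [MulAction S G₂]
    (e : K → G₁ → G₂) : Prop :=
  (∀ k, IsActHom S (e k)) ∧ ∀ x y, (∀ k, e k x = e k y) → x = y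

section PowerEmbedding

variable {S : Type} [Monoid S] {K G₁ G₂ : Type} [MulAction S G₁] [MulAction S G₂]

theorem IsActHom.comp_s19 {G₃ : Type} [MulAction S G₃] {g : G₂ → G₃} {f : G₁ → G₂}
    (hg : IsActHom S g) (hf : IsActHom S f) : IsActHom S (g ∘ f) := fun s a => by
  simp only [Function.comp_apply, hf s a, hg s (f a)]

theorem IsActHom.sumMap {C D : Type} [MulAction S C] [MulAction S D] {g : C → D} {f : G₁ → G₂}
    (hg : IsActHom S g) (hf : IsActHom S f) : IsActHom S (Sum.map g f) := by
  rintro s (c | x)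
  · exact congrArg Sum.inl (hg s c)
  · exact congrArg Sum.inr (hf s x)

theorem actClosure_subset_of_isPowerEmbedding {e : K → G₁ → G₂} (he : IsPowerEmbedding S e)
    {n : ℕ} (T : Set (FreeAct S n × FreeAct S n)) :
    actClosure S G₂ T ⊆ actClosure S G₁ T := fun p hp f hf hT =>
  he.2 _ _ fun k => hp (e k ∘ f) ((he.1 k).comp_s19 hf) fun _ hq => congrArg (e k) (hT hq)

theorem geomEquiv_of_isPowerEmbedding {K' : Type} {e : K → G₁ → G₂} {e' : K' → G₂ → G₁}
    (he : IsPowerEmbedding S e) (he' : IsPowerEmbedding S e') : GeomEquiv S G₁ G₂ :=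
  fun _ T => (actClosure_subset_of_isPowerEmbedding he' T).antisymm
    (actClosure_subset_of_isPowerEmbedding he T)

theorem IsPowerEmbedding.of_injective {f : G₁ → G₂} (hf : IsActHom S f)
    (hinj : Function.Injective f) : IsPowerEmbedding S (fun _ : Unit => f) :=
  ⟨fun _ => hf, fun _ _ h => hinj (h ())⟩

theorem IsPowerEmbedding.sumMap [Nonempty K] (C : Type) [MulAction S C] {e : K → G₁ → G₂}
    (he : IsPowerEmbedding S e) : IsPowerEmbedding S (fun k => Sum.map (id : C → C) (e k)) := by
  refine ⟨fun k => IsActHom.sumMap (fun _ _ => rfl) (he.1 k), ?_⟩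
  rintro (c | x) (c' | x') h
  · simpa using h (Classical.arbitrary K)
  · simpa using h (Classical.arbitrary K)
  · simpa using h (Classical.arbitrary K)
  · exact congrArg Sum.inr (he.2 x x' fun k => Sum.inr_injective (h k))

end PowerEmbedding

section Copies

variable (S : Type) [Monoid S] {I : Type} (A : Type) [MulAction S A]

def copiesToSum [DecidableEq I] (k : I) (p : Copies I A) : A ⊕ A :=
  if p.1 = k then Sum.inl p.2 else Sum.inr p.2

def sumToCopies (i j : I) : A ⊕ A → Copies I A :=
  Sum.elim (fun a => (i, a)) (fun a => (j, a))

theorem isPowerEmbedding_copiesToSum [DecidableEq I] :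
    IsPowerEmbedding S (copiesToSum (I := I) A) := by
  refine ⟨fun k s p => ?_, ?_⟩
  · show (if p.1 = k then Sum.inl (s • p.2) else Sum.inr (s • p.2)) = s • copiesToSum A k p
    unfold copiesToSum
    split_ifs <;> rfl
  · rintro ⟨m, a⟩ ⟨m', a'⟩ h
    have hm := h m
    by_cases hmm : m' = m
    · subst hmm
      simp only [copiesToSum, if_true, Sum.inl.injEq] at hm
      rw [hm]
    · simp [copiesToSum, hmm] at hm

theorem isActHom_sumToCopies (i j : I) : IsActHom S (sumToCopies A i j) := by
  rintro s (a | a) <;> rfl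

theorem sumToCopies_injective {i j : I} (hij : i ≠ j) :
    Function.Injective (sumToCopies A i j) := by
  rintro (a | a) (b | b) h
  · exact congrArg Sum.inl (Prod.mk.inj (h : ((i, a) : I × A) = (i, b))).2
  · exact absurd (Prod.mk.inj (h : ((i, a) : I × A) = (j, b))).1 hij
  · exact absurd (Prod.mk.inj (h : ((j, a) : I × A) = (i, b))).1 hij.symm
  · exact congrArg Sum.inr (Prod.mk.inj (h : ((j, a) : I × A) = (j, b))).2

end Copies

/-- For any `S`-act `A` and a set `I` with `|I| ≥ 2`,
`A^{(*)I} ∼ A^{(*)2} = A ⊔ A`; moreover, `C ⊔ A^{(*)I} ∼ C ⊔ (A ⊔ A)` for any `S`-act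
`C`. -/
theorem copies_geom_equiv_two_copies
    (S : Type) [Monoid S] (A C : Type) [MulAction S A] [MulAction S C]
    (I : Type) (hI : ∃ i j : I, i ≠ j) :
    GeomEquiv S (Copies I A) (A ⊕ A) ∧
    GeomEquiv S (C ⊕ Copies I A) (C ⊕ (A ⊕ A)) := by
  classical
  obtain ⟨i, j, hij⟩ := hI
  have : Nonempty I := ⟨i⟩
  have hto := isPowerEmbedding_copiesToSum S (I := I) A
  have hfrom := IsPowerEmbedding.of_injective (isActHom_sumToCopies S A i j)
    (sumToCopies_injective A hij)
  exact ⟨geomEquiv_of_isPowerEmbedding hto hfrom,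
    geomEquiv_of_isPowerEmbedding (hto.sumMap C) (hfrom.sumMap C)⟩
end
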